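/- arXiv:2308.01181 — 4 statements merged into one kernel-verified Lean document; each statement's English description precedes it below -/
import Mathlib

section
/- Let A be a nonzero polynomial in F_2[x]. Then there exists a positive integer m such that for all k ≥ m, A_{2k} = x^2 + x and A_{2k+1} = 1; consequently the Collatz sequences of A are of finite length ℓ_A = m + 1 (for the least such m), and ℓ_A ≤ 2^{deg(A) - 1}. -/
open Polynomial Finset

/-- The polynomial `M = x^2 + x + 1` over `F_2`. -/
noncomputable def M : Polynomial (ZMod 2) := X ^ 2 + X + 1

/-- The odd part of a binary polynomial: `P` divided by `x^{val_x(P)} (x+1)^{val_{x+1}(P)}`. -/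
noncomputable def oddPart (P : Polynomial (ZMod 2)) : Polynomial (ZMod 2) :=
  P / (X ^ P.rootMultiplicity 0 * (X + 1) ^ P.rootMultiplicity 1)

/-- The Collatz sequence of a binary polynomial `A`:
`A_0 = A`, `A_{2k+1} = oddPart A_{2k}`, `A_{2k+2} = 1 + M * A_{2k+1}`. -/
noncomputable def collatz (A : Polynomial (ZMod 2)) : ℕ → Polynomial (ZMod 2)
  | 0 => A
  | n + 1 => if n % 2 = 0 then oddPart (collatz A n) else 1 + M * collatz A n

/-- `a_k`: the multiplicity of `x` in `A_k`. -/
noncomputable def aSeq (A : Polynomial (ZMod 2)) (k : ℕ) : ℕ :=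
  (collatz A k).rootMultiplicity 0

/-- `b_k`: the multiplicity of `x + 1` in `A_k`. -/
noncomputable def bSeq (A : Polynomial (ZMod 2)) (k : ℕ) : ℕ :=
  (collatz A k).rootMultiplicity 1

/-- The length `ℓ_A = m + 1`, where `m` is the least nonnegative integer
with `A_{2m+1} = 1`. -/
noncomputable def collatzLength (A : Polynomial (ZMod 2)) : ℕ :=
  sInf {m : ℕ | collatz A (2 * m + 1) = 1} + 1

/-!
For odd `B`, the polynomial `1 + M B` has degree `deg B + 2` and is divisible by `x (x + 1)`,
so the odd step `B ↦ oddPart (1 + M B)` never raises the degree, and keeps it only when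
`1 + M B = (x² + x) B'`, i.e. `M (B + 1) = (x² + x) (B' + 1)` since `1 + M = x² + x`.
Along a cycle the degree is constant, so telescoping gives `M ^ p (B + 1) = (x² + x) ^ p (B + 1)`;
as `M ^ p` and `(x² + x) ^ p` differ at `0`, the only cycle is `B = 1`.
An odd polynomial of degree at most `d` is determined by its `d - 1` middle coefficients, so an
orbit avoiding `1` for `2 ^ (d - 1)` steps would repeat, i.e. enter a cycle other than `{1}`.
-/

namespace BinaryCollatz

variable {B : (ZMod 2)[X]}

/-- Odd in the sense of the paper: coprime to `x (x + 1)`. -/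
def IsOddPoly (B : (ZMod 2)[X]) : Prop := B.eval 0 = 1 ∧ B.eval 1 = 1

lemma IsOddPoly.ne_zero (hB : IsOddPoly B) : B ≠ 0 := by
  rintro rfl
  simpa using hB.1

lemma isOddPoly_one : IsOddPoly 1 := by simp [IsOddPoly]

lemma isOddPoly_of_not_isRoot (h0 : ¬B.IsRoot 0) (h1 : ¬B.IsRoot 1) :
    IsOddPoly B := by
  have : ∀ c : ZMod 2, c ≠ 0 → c = 1 := by decide
  exact ⟨this _ h0, this _ h1⟩

lemma X_sub_C_one_eq : (X - C 1 : (ZMod 2)[X]) = X + 1 := by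
  rw [CharTwo.sub_eq_add, C_1]

lemma X_add_one_ne_zero : (X + 1 : (ZMod 2)[X]) ≠ 0 := by
  simpa using X_add_C_ne_zero (1 : ZMod 2)

lemma X_pow_mul_X_add_one_pow_ne_zero (a b : ℕ) : (X ^ a * (X + 1) ^ b : (ZMod 2)[X]) ≠ 0 :=
  mul_ne_zero (pow_ne_zero _ X_ne_zero) (pow_ne_zero _ X_add_one_ne_zero)

lemma rootMultiplicity_X_pow_mul_X_add_one_pow (a b : ℕ) :
    rootMultiplicity 0 (X ^ a * (X + 1) ^ b : (ZMod 2)[X]) = a ∧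
      rootMultiplicity 1 (X ^ a * (X + 1) ^ b : (ZMod 2)[X]) = b := by
  have hne := X_pow_mul_X_add_one_pow_ne_zero a b
  have hX := rootMultiplicity_X_sub_C_pow (0 : ZMod 2) a
  have hX1 := rootMultiplicity_X_sub_C_pow (1 : ZMod 2) b
  rw [map_zero, sub_zero] at hX
  rw [X_sub_C_one_eq] at hX1
  rw [rootMultiplicity_mul hne, rootMultiplicity_mul hne, hX, hX1,
    rootMultiplicity_eq_zero (by simp), rootMultiplicity_eq_zero (by simp)]
  omega

/-- `X ^ a` and `(X + 1) ^ b` are coprime and both divide `P`, so their product does. -/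
lemma oddPart_spec {P : (ZMod 2)[X]} (hP : P ≠ 0) :
    P = X ^ P.rootMultiplicity 0 * (X + 1) ^ P.rootMultiplicity 1 * oddPart P ∧
      IsOddPoly (oddPart P) := by
  set a := P.rootMultiplicity 0
  set b := P.rootMultiplicity 1
  have hD := X_pow_mul_X_add_one_pow_ne_zero a b
  have hcop : IsCoprime (X : (ZMod 2)[X]) (X + 1) := ⟨-1, 1, by ring⟩
  have hdvd : X ^ a * (X + 1) ^ b ∣ P := by
    refine hcop.pow.mul_dvd ?_ ?_
    · have := pow_rootMultiplicity_dvd P 0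
      rwa [map_zero, sub_zero] at this
    · have := pow_rootMultiplicity_dvd P 1
      rwa [X_sub_C_one_eq] at this
  have hdec : P = X ^ a * (X + 1) ^ b * oddPart P := (EuclideanDomain.mul_div_cancel' hD hdvd).symm
  have hQ : oddPart P ≠ 0 := right_ne_zero_of_mul (hdec ▸ hP)
  have hmul := rootMultiplicity_mul (x := (0 : ZMod 2)) (hdec ▸ hP)
  have hmul1 := rootMultiplicity_mul (x := (1 : ZMod 2)) (hdec ▸ hP)
  rw [← hdec, (rootMultiplicity_X_pow_mul_X_add_one_pow a b).1] at hmul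
  rw [← hdec, (rootMultiplicity_X_pow_mul_X_add_one_pow a b).2] at hmul1
  refine ⟨hdec, isOddPoly_of_not_isRoot ?_ ?_⟩ <;>
    rw [← rootMultiplicity_pos hQ] <;> omega

lemma natDegree_oddPart_add {P : (ZMod 2)[X]} (hP : P ≠ 0) :
    P.rootMultiplicity 0 + P.rootMultiplicity 1 + (oddPart P).natDegree = P.natDegree := by
  obtain ⟨hdec, hodd⟩ := oddPart_spec hP
  conv_rhs => rw [hdec]
  rw [natDegree_mul (X_pow_mul_X_add_one_pow_ne_zero _ _) hodd.ne_zero,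
    natDegree_mul (pow_ne_zero _ X_ne_zero) (pow_ne_zero _ X_add_one_ne_zero),
    natDegree_X_pow, natDegree_pow, ← C_1, natDegree_X_add_C, mul_one]

lemma natDegree_M : M.natDegree = 2 := by
  unfold M
  compute_degree!

lemma M_ne_zero : M ≠ 0 := by
  intro h
  simpa [h] using natDegree_M

lemma one_add_M : 1 + M = X ^ 2 + X := by
  unfold M
  linear_combination (CharTwo.two_eq_zero : (2 : (ZMod 2)[X]) = 0)

/-- The odd-to-odd step `A_{2k+1} ↦ A_{2k+3}` of the Collatz sequence. -/
noncomputable def oddStep (B : (ZMod 2)[X]) : (ZMod 2)[X] := oddPart (1 + M * B)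

lemma IsOddPoly.natDegree_one_add_M_mul (hB : IsOddPoly B) :
    (1 + M * B).natDegree = B.natDegree + 2 := by
  have hMB : (M * B).natDegree = B.natDegree + 2 := by
    rw [natDegree_mul M_ne_zero hB.ne_zero, natDegree_M, add_comm]
  rw [natDegree_add_eq_right_of_natDegree_lt (by rw [hMB, natDegree_one]; omega), hMB]

lemma IsOddPoly.one_add_M_mul_ne_zero (hB : IsOddPoly B) : 1 + M * B ≠ 0 := by
  intro h
  simpa [h] using hB.natDegree_one_add_M_mul

lemma IsOddPoly.rootMultiplicity_one_add_M_mul_pos (hB : IsOddPoly B) :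
    0 < (1 + M * B).rootMultiplicity 0 ∧ 0 < (1 + M * B).rootMultiplicity 1 := by
  have hne := hB.one_add_M_mul_ne_zero
  refine ⟨(rootMultiplicity_pos hne).2 ?_, (rootMultiplicity_pos hne).2 ?_⟩ <;>
  · simp only [M, IsRoot.def, eval_add, eval_one, eval_mul, eval_pow, eval_X, one_pow, ne_eq,
      OfNat.ofNat_ne_zero, not_false_eq_true, zero_pow, add_zero, zero_add, hB.1, hB.2, mul_one]
    decide

lemma isOddPoly_oddStep (hB : IsOddPoly B) : IsOddPoly (oddStep B) :=
  (oddPart_spec hB.one_add_M_mul_ne_zero).2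

lemma IsOddPoly.natDegree_oddStep_add (hB : IsOddPoly B) :
    (1 + M * B).rootMultiplicity 0 + (1 + M * B).rootMultiplicity 1 + (oddStep B).natDegree =
      B.natDegree + 2 := by
  rw [oddStep, natDegree_oddPart_add hB.one_add_M_mul_ne_zero, hB.natDegree_one_add_M_mul]

lemma IsOddPoly.natDegree_oddStep_le (hB : IsOddPoly B) :
    (oddStep B).natDegree ≤ B.natDegree := by
  have h := hB.natDegree_oddStep_add
  obtain ⟨ha, hb⟩ := hB.rootMultiplicity_one_add_M_mul_pos
  omega

lemma IsOddPoly.M_mul_add_one_of_natDegree_oddStep_eq (hB : IsOddPoly B)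
    (hdeg : (oddStep B).natDegree = B.natDegree) :
    M * (B + 1) = (X ^ 2 + X) * (oddStep B + 1) := by
  have h := hB.natDegree_oddStep_add
  obtain ⟨ha, hb⟩ := hB.rootMultiplicity_one_add_M_mul_pos
  have hdec := (oddPart_spec hB.one_add_M_mul_ne_zero).1
  rw [show (1 + M * B).rootMultiplicity 0 = 1 by omega,
    show (1 + M * B).rootMultiplicity 1 = 1 by omega] at hdec
  rw [oddStep]
  linear_combination hdec + one_add_M - (CharTwo.two_eq_zero : (2 : (ZMod 2)[X]) = 0)

lemma IsOddPoly.iterate_oddStep (hB : IsOddPoly B) (k : ℕ) : IsOddPoly (oddStep^[k] B) := by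
  induction k with
  | zero => exact hB
  | succ k ih => rw [Function.iterate_succ_apply']; exact isOddPoly_oddStep ih

lemma IsOddPoly.antitone_natDegree_iterate_oddStep (hB : IsOddPoly B) :
    Antitone fun k => (oddStep^[k] B).natDegree :=
  antitone_nat_of_succ_le fun k => by
    rw [Function.iterate_succ_apply']
    exact (hB.iterate_oddStep k).natDegree_oddStep_le

lemma IsOddPoly.eq_one_of_iterate_oddStep_eq (hB : IsOddPoly B) {p : ℕ} (hp : 0 < p)
    (hcyc : oddStep^[p] B = B) : B = 1 := by
  have hdeg : ∀ k ≤ p, (oddStep^[k] B).natDegree = B.natDegree := fun k hk => by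
    have hle := hB.antitone_natDegree_iterate_oddStep hk
    simp only [hcyc] at hle
    exact le_antisymm (hB.antitone_natDegree_iterate_oddStep k.zero_le) hle
  have htel : ∀ k ≤ p, M ^ k * (B + 1) = (X ^ 2 + X) ^ k * (oddStep^[k] B + 1) := by
    intro k hk
    induction k with
    | zero => simp
    | succ k ih =>
      have hstep := (hB.iterate_oddStep k).M_mul_add_one_of_natDegree_oddStep_eq
        (by rw [← Function.iterate_succ_apply' oddStep, hdeg k (by omega), hdeg (k + 1) hk])
      rw [Function.iterate_succ_apply']
      linear_combination M * ih (by omega) + (X ^ 2 + X) ^ k * hstep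
  have hpow : M ^ p ≠ (X ^ 2 + X) ^ p := fun h => by
    simpa [M, hp.ne'] using congrArg (eval 0) h
  have hsum := htel p le_rfl
  rw [hcyc, ← sub_eq_zero, ← sub_mul] at hsum
  exact CharTwo.add_eq_zero.1 ((mul_eq_zero.1 hsum).resolve_left (sub_ne_zero.2 hpow))

/-- Two odd polynomials of degree at most `d` agreeing in degrees `1, …, d - 1` differ by
`c x ^ d`, and evaluating at `1` forces `c = 0`. -/
lemma IsOddPoly.eq_of_coeff_eq {C : (ZMod 2)[X]} {d : ℕ} (hB : IsOddPoly B) (hC : IsOddPoly C)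
    (hBd : B.natDegree ≤ d) (hCd : C.natDegree ≤ d)
    (h : ∀ i, 0 < i → i < d → B.coeff i = C.coeff i) : B = C := by
  have hdiff : B - C = Polynomial.C ((B - C).coeff d) * X ^ d := by
    ext i
    rw [coeff_C_mul_X_pow]
    split_ifs with hid
    · rw [hid]
    rcases Nat.eq_zero_or_pos i with rfl | hi
    · rw [coeff_zero_eq_eval_zero, eval_sub, hB.1, hC.1, sub_self]
    rcases lt_or_gt_of_ne hid with hlt | hgt
    · rw [coeff_sub, h i hi hlt, sub_self]
    · exact coeff_eq_zero_of_natDegree_lt ((natDegree_sub_le_of_le hBd hCd).trans_lt (by simpa))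
  have hcoeff : (B - C).coeff d = 0 := by
    simpa [hB.2, hC.2] using (congrArg (eval 1) hdiff).symm
  rw [← sub_eq_zero, hdiff, hcoeff, map_zero, zero_mul]

lemma oddStep_one : oddStep 1 = 1 :=
  (isOddPoly_oddStep isOddPoly_one).eq_of_coeff_eq isOddPoly_one
    (isOddPoly_one.natDegree_oddStep_le.trans natDegree_one.le) natDegree_one.le
    (fun _ hi hid => absurd hid (by omega))

lemma IsOddPoly.exists_iterate_oddStep_eq_one (hB : IsOddPoly B) :
    ∃ k < 2 ^ (B.natDegree - 1), oddStep^[k] B = 1 := by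
  set d := B.natDegree
  by_contra! hne
  have hdeg (k : ℕ) : (oddStep^[k] B).natDegree ≤ d :=
    hB.antitone_natDegree_iterate_oddStep k.zero_le
  let middleCoeffs (P : (ZMod 2)[X]) : Fin (d - 1) → ZMod 2 := fun i => P.coeff (i + 1)
  have hinj {P Q : (ZMod 2)[X]} (hP : IsOddPoly P) (hQ : IsOddPoly Q) (hPd : P.natDegree ≤ d)
      (hQd : Q.natDegree ≤ d) (h : middleCoeffs P = middleCoeffs Q) : P = Q :=
    hP.eq_of_coeff_eq hQ hPd hQd fun i hi hid => by
      simpa [middleCoeffs, Nat.sub_add_cancel hi] using congrFun h ⟨i - 1, by omega⟩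
  have hmaps : Set.MapsTo (fun k => middleCoeffs (oddStep^[k] B)) (range (2 ^ (d - 1)))
      (univ.erase 0 : Finset (Fin (d - 1) → ZMod 2)) := fun k hk => by
    refine mem_erase.2 ⟨fun h0 => hne k (mem_range.1 hk) ?_, mem_univ _⟩
    refine hinj (hB.iterate_oddStep k) isOddPoly_one (hdeg k) (by simp) ?_
    refine h0.trans (funext fun i => ?_)
    simp [middleCoeffs, coeff_one]
  have hcard :
      (univ.erase 0 : Finset (Fin (d - 1) → ZMod 2)).card < (range (2 ^ (d - 1))).card := by
    simp [card_erase_of_mem, ZMod.card]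
  obtain ⟨i, hi, j, hj, hij, heq⟩ := exists_ne_map_eq_of_card_lt_of_maps_to hcard hmaps
  have heq' := hinj (hB.iterate_oddStep i) (hB.iterate_oddStep j) (hdeg i) (hdeg j) heq
  have hcycle {m n : ℕ} (hmn : m < n) (h : oddStep^[m] B = oddStep^[n] B) :
      oddStep^[m] B = 1 :=
    (hB.iterate_oddStep m).eq_one_of_iterate_oddStep_eq (Nat.sub_pos_of_lt hmn) (by
      rw [← Function.iterate_add_apply, Nat.sub_add_cancel hmn.le, h])
  rcases lt_or_gt_of_ne hij with hlt | hgt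
  · exact hne i (mem_range.1 hi) (hcycle hlt heq')
  · exact hne j (mem_range.1 hj) (hcycle hgt heq'.symm)

lemma collatz_two_mul_add_one (A : (ZMod 2)[X]) (k : ℕ) :
    collatz A (2 * k + 1) = oddStep^[k] (oddPart A) := by
  induction k with
  | zero => rfl
  | succ k ih =>
    rw [Function.iterate_succ_apply', ← ih]
    simp [collatz, Nat.mul_succ, oddStep]

lemma collatz_two_mul_add_two (A : (ZMod 2)[X]) (k : ℕ) :
    collatz A (2 * k + 2) = 1 + M * collatz A (2 * k + 1) := by
  simp [collatz]

end BinaryCollatz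

open BinaryCollatz

theorem collatz_conjecture_binary (A : Polynomial (ZMod 2)) (hA : A ≠ 0) :
    (∃ m : ℕ, 0 < m ∧ ∀ k ≥ m,
      collatz A (2 * k) = X ^ 2 + X ∧ collatz A (2 * k + 1) = 1) ∧
    collatzLength A ≤ 2 ^ (A.natDegree - 1) := by
  obtain ⟨-, hodd⟩ := oddPart_spec hA
  obtain ⟨k, hk, hk1⟩ := hodd.exists_iterate_oddStep_eq_one
  have hone : ∀ j ≥ k, collatz A (2 * j + 1) = 1 := fun j hj => by
    rw [collatz_two_mul_add_one, ← Nat.sub_add_cancel hj, Function.iterate_add_apply, hk1,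
      Function.iterate_fixed oddStep_one]
  refine ⟨⟨k + 1, k.succ_pos, fun j hj => ?_⟩, ?_⟩
  · obtain ⟨i, rfl⟩ : ∃ i, j = i + 1 := ⟨j - 1, by omega⟩
    refine ⟨?_, hone _ (by omega)⟩
    rw [Nat.mul_succ, collatz_two_mul_add_two, hone i (by omega), mul_one, one_add_M]
  · have hdeg : (oddPart A).natDegree ≤ A.natDegree := by
      have := natDegree_oddPart_add hA
      omega
    have hlen : collatzLength A ≤ k + 1 := Nat.add_le_add_right (Nat.sInf_le (hone k le_rfl)) 1
    have := Nat.pow_le_pow_right two_pos (Nat.sub_le_sub_right hdeg 1)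
    omega
end

section
/- Let A be a nonzero polynomial in F_2[x], and write d_k = deg(A_k). Then for every k ≥ 1: d_{2k+1} ≤ d_{2k-1} ≤ deg(A), d_{2k} = d_{2k-1} + 2, and d_{2k} = d_{2k+1} + a_{2k} + b_{2k}. -/
/-! Removing the factors `x^a (x+1)^b` lowers the degree by `a + b` and leaves a polynomial that
takes the value `1` at both points of `𝔽₂`. Since `M` also takes the value `1` there, `1 + M Q`
vanishes at `0` and `1` for such `Q`, so `a, b ≥ 1` at every even step after the first; as
`1 + M Q` has degree `deg Q + 2`, the degree of the odd terms never increases. -/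

open Polynomial Finset

lemma X_add_one_eq_X_sub_C_one : (X + 1 : (ZMod 2)[X]) = X - C 1 := by
  rw [CharTwo.sub_eq_add, C_1]

lemma X_add_one_ne_zero : (X + 1 : (ZMod 2)[X]) ≠ 0 :=
  X_add_one_eq_X_sub_C_one ▸ X_sub_C_ne_zero 1

section OddPart

variable {P : (ZMod 2)[X]}

lemma X_pow_mul_X_add_one_pow_dvd (P : (ZMod 2)[X]) :
    X ^ P.rootMultiplicity 0 * (X + 1) ^ P.rootMultiplicity 1 ∣ P := by
  have hcop : IsCoprime (X : (ZMod 2)[X]) (X + 1) := ⟨-1, 1, by ring⟩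
  have h0 : X ^ P.rootMultiplicity 0 ∣ P := by simpa using P.pow_rootMultiplicity_dvd 0
  have h1 : (X + 1) ^ P.rootMultiplicity 1 ∣ P := by
    simpa [X_add_one_eq_X_sub_C_one] using P.pow_rootMultiplicity_dvd 1
  exact hcop.pow.mul_dvd h0 h1

lemma X_pow_mul_X_add_one_pow_mul_oddPart (P : (ZMod 2)[X]) :
    X ^ P.rootMultiplicity 0 * (X + 1) ^ P.rootMultiplicity 1 * oddPart P = P :=
  EuclideanDomain.mul_div_cancel' (mul_ne_zero (pow_ne_zero _ X_ne_zero)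
    (pow_ne_zero _ X_add_one_ne_zero)) (X_pow_mul_X_add_one_pow_dvd P)

lemma oddPart_ne_zero (hP : P ≠ 0) : oddPart P ≠ 0 :=
  right_ne_zero_of_mul ((X_pow_mul_X_add_one_pow_mul_oddPart P).symm ▸ hP)

lemma natDegree_eq_add_natDegree_oddPart (hP : P ≠ 0) :
    P.natDegree = P.rootMultiplicity 0 + P.rootMultiplicity 1 + (oddPart P).natDegree := by
  conv_lhs => rw [← X_pow_mul_X_add_one_pow_mul_oddPart P]
  rw [natDegree_mul (by simp [X_add_one_ne_zero]) (oddPart_ne_zero hP),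
    natDegree_mul (by simp) (by simp [X_add_one_ne_zero]), natDegree_pow, natDegree_pow,
    X_add_one_eq_X_sub_C_one, natDegree_X, natDegree_X_sub_C, mul_one, mul_one]

lemma rootMultiplicity_oddPart (hP : P ≠ 0) (a : ZMod 2) :
    (oddPart P).rootMultiplicity a = 0 := by
  have hdecomp := X_pow_mul_X_add_one_pow_mul_oddPart P
  have hmul (a : ZMod 2) := rootMultiplicity_mul (x := a) (hdecomp.symm ▸ hP)
  simp only [hdecomp, rootMultiplicity_mul (left_ne_zero_of_mul (hdecomp.symm ▸ hP))] at hmul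
  obtain rfl | rfl : a = 0 ∨ a = 1 := by revert a; decide
  · have hX : rootMultiplicity (0 : ZMod 2) (X ^ P.rootMultiplicity 0) = P.rootMultiplicity 0 := by
      simpa using rootMultiplicity_X_sub_C_pow (0 : ZMod 2) (P.rootMultiplicity 0)
    have hX1 : rootMultiplicity (0 : ZMod 2) ((X + 1) ^ P.rootMultiplicity 1) = 0 := by
      simp [rootMultiplicity_eq_zero_iff]
    linarith [hmul 0]
  · have hX : rootMultiplicity (1 : ZMod 2) (X ^ P.rootMultiplicity 0) = 0 := by
      simp [rootMultiplicity_eq_zero_iff]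
    have hX1 : rootMultiplicity (1 : ZMod 2) ((X + 1) ^ P.rootMultiplicity 1) =
        P.rootMultiplicity 1 := by
      rw [X_add_one_eq_X_sub_C_one, rootMultiplicity_X_sub_C_pow]
    linarith [hmul 1]

lemma eval_oddPart (hP : P ≠ 0) (a : ZMod 2) : (oddPart P).eval a = 1 := by
  have hne : (oddPart P).eval a ≠ 0 := fun hroot =>
    ((rootMultiplicity_pos (oddPart_ne_zero hP)).2 hroot).ne' (rootMultiplicity_oddPart hP a)
  exact Fin.eq_one_of_ne_zero _ hne

end OddPart

lemma eval_M (a : ZMod 2) : M.eval a = 1 := by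
  obtain rfl | rfl : a = 0 ∨ a = 1 := by revert a; decide
  all_goals simp [M, CharTwo.add_self_eq_zero]

lemma natDegree_M : M.natDegree = 2 := by
  unfold M; compute_degree!

lemma natDegree_one_add_M_mul {Q : (ZMod 2)[X]} (hQ : Q ≠ 0) :
    (1 + M * Q).natDegree = Q.natDegree + 2 := by
  have hMQ : (M * Q).natDegree = Q.natDegree + 2 := by
    rw [natDegree_mul (by rintro h; simpa [h] using natDegree_M) hQ, natDegree_M, add_comm]
  rw [natDegree_add_eq_right_of_natDegree_lt (by rw [hMQ, natDegree_one]; omega), hMQ]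

lemma isRoot_one_add_M_mul {Q : (ZMod 2)[X]} (hQ : ∀ a, Q.eval a = 1) (a : ZMod 2) :
    (1 + M * Q).IsRoot a := by
  simp only [IsRoot, eval_add, eval_mul, eval_one, eval_M, hQ]
  decide

section Collatz

variable {A : (ZMod 2)[X]}

lemma collatz_two_mul_add_one (A : (ZMod 2)[X]) (k : ℕ) :
    collatz A (2 * k + 1) = oddPart (collatz A (2 * k)) := by
  simp [collatz]

lemma collatz_two_mul_succ (A : (ZMod 2)[X]) (k : ℕ) :
    collatz A (2 * (k + 1)) = 1 + M * collatz A (2 * k + 1) := by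
  rw [show 2 * (k + 1) = 2 * k + 1 + 1 from rfl, collatz, if_neg (by omega)]

lemma collatz_ne_zero (hA : A ≠ 0) (n : ℕ) : collatz A n ≠ 0 := by
  induction n with
  | zero => exact hA
  | succ n ih =>
    rw [collatz]
    split
    · exact oddPart_ne_zero ih
    · exact fun h => by simpa [h] using natDegree_one_add_M_mul ih

lemma natDegree_collatz_two_mul (hA : A ≠ 0) (k : ℕ) :
    (collatz A (2 * k)).natDegree
      = (collatz A (2 * k + 1)).natDegree + aSeq A (2 * k) + bSeq A (2 * k) := by
  rw [collatz_two_mul_add_one, natDegree_eq_add_natDegree_oddPart (collatz_ne_zero hA _), aSeq,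
    bSeq]
  ring

lemma natDegree_collatz_two_mul_succ (hA : A ≠ 0) (k : ℕ) :
    (collatz A (2 * (k + 1))).natDegree = (collatz A (2 * k + 1)).natDegree + 2 := by
  rw [collatz_two_mul_succ, natDegree_one_add_M_mul (collatz_ne_zero hA _)]

lemma isRoot_collatz_two_mul_succ (hA : A ≠ 0) (k : ℕ) (a : ZMod 2) :
    (collatz A (2 * (k + 1))).IsRoot a := by
  rw [collatz_two_mul_succ, collatz_two_mul_add_one]
  exact isRoot_one_add_M_mul (eval_oddPart (collatz_ne_zero hA _)) a

lemma natDegree_collatz_two_mul_succ_add_one_le (hA : A ≠ 0) (k : ℕ) :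
    (collatz A (2 * (k + 1) + 1)).natDegree ≤ (collatz A (2 * k + 1)).natDegree := by
  have ha : 0 < aSeq A (2 * (k + 1)) :=
    (rootMultiplicity_pos (collatz_ne_zero hA _)).2 (isRoot_collatz_two_mul_succ hA k 0)
  have hb : 0 < bSeq A (2 * (k + 1)) :=
    (rootMultiplicity_pos (collatz_ne_zero hA _)).2 (isRoot_collatz_two_mul_succ hA k 1)
  have := natDegree_collatz_two_mul hA (k + 1)
  have := natDegree_collatz_two_mul_succ hA k
  omega

lemma natDegree_collatz_two_mul_add_one_le (hA : A ≠ 0) (k : ℕ) :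
    (collatz A (2 * k + 1)).natDegree ≤ A.natDegree := by
  induction k with
  | zero => have := natDegree_collatz_two_mul hA 0; simp only [collatz] at this ⊢; omega
  | succ k ih => exact (natDegree_collatz_two_mul_succ_add_one_le hA k).trans ih

end Collatz

theorem degrees_of_collatz_terms (A : Polynomial (ZMod 2)) (hA : A ≠ 0) :
    ∀ k : ℕ, 1 ≤ k →
      (collatz A (2 * k + 1)).natDegree ≤ (collatz A (2 * k - 1)).natDegree ∧
      (collatz A (2 * k - 1)).natDegree ≤ A.natDegree ∧
      (collatz A (2 * k)).natDegree = (collatz A (2 * k - 1)).natDegree + 2 ∧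
      (collatz A (2 * k)).natDegree
        = (collatz A (2 * k + 1)).natDegree + aSeq A (2 * k) + bSeq A (2 * k) := by
  intro k hk
  obtain ⟨k, rfl⟩ := Nat.exists_eq_add_of_le' hk
  rw [show 2 * (k + 1) - 1 = 2 * k + 1 by omega]
  exact ⟨natDegree_collatz_two_mul_succ_add_one_le hA k,
    natDegree_collatz_two_mul_add_one_le hA k, natDegree_collatz_two_mul_succ hA k,
    natDegree_collatz_two_mul hA (k + 1)⟩
end

section
/- Let r ≥ 1 and let A = M^{2^r} + M^{2^r - 1} + ⋯ + M + 1 = Σ_{i=0}^{2^r} M^i in F_2[x]. Then for every 0 ≤ k ≤ 2^r - 2, A_{2k+1} = 1 + M^{k+1}(M+1)^{2^r - k - 1} (so deg(A_{2k+1}) = deg(A)), A_{2(2^r - 1)+1} = 1, and the length ℓ_A equals 2^r. -/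
open Polynomial Finset

/-! Write `N = M + 1 = x (x + 1)`. By Frobenius `N ^ 2 ^ r = M ^ 2 ^ r + 1`, which gives
`∑_{i < 2^r} M^i = N^(2^r - 1)` and hence `A = 1 + M N^(2^r - 1)`.
The identity `1 + M (1 + M^i N^(j+1)) = N (1 + M^(i+1) N^j)` shows that each Collatz round trades
one factor `N` for one factor `M`, and the cofactor `1 + M^(i+1) N^j` is odd while `j ≥ 1`, because
`N` vanishes at both points of `F_2`. Once the exponent of `N` is down to `1`, the next even term is
`N (1 + M^(2^r)) = N^(2^r + 1)`, whose odd part is `1`. -/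

lemma geom_sum_two_pow_eq_add_one_pow {R : Type*} [CommSemiring R] [CharP R 2] (x : R)
    (r : ℕ) : ∑ i ∈ range (2 ^ r), x ^ i = (x + 1) ^ (2 ^ r - 1) := by
  induction r with
  | zero => simp
  | succ r ih =>
    have hexp : 2 ^ (r + 1) - 1 = 2 ^ r + (2 ^ r - 1) := by
      have := Nat.one_le_two_pow (n := r)
      rw [pow_succ]
      omega
    calc ∑ i ∈ range (2 ^ (r + 1)), x ^ i = (x ^ 2 ^ r + 1) * ∑ i ∈ range (2 ^ r), x ^ i := by
          rw [pow_succ, mul_two, sum_range_add]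
          simp only [pow_add, ← mul_sum]
          ring
      _ = (x + 1) ^ (2 ^ (r + 1) - 1) := by rw [ih, hexp, pow_add, add_pow_char_pow, one_pow]

lemma X_add_one_eq_X_sub_C {R : Type*} [Ring R] [CharP R 2] : (X : R[X]) + 1 = X - C 1 := by
  rw [map_one, CharTwo.sub_eq_add]

lemma M_add_one : M + 1 = X * (X + 1) := by
  rw [M, add_assoc, CharTwo.add_self_eq_zero (1 : (ZMod 2)[X]), add_zero]
  ring

lemma M_ne_zero : M ≠ 0 := by
  intro h
  simpa [M] using congrArg (eval 0) h

lemma M_add_one_ne_zero : M + 1 ≠ 0 := by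
  rw [M_add_one, X_add_one_eq_X_sub_C]
  exact mul_ne_zero X_ne_zero (X_sub_C_ne_zero 1)

lemma eval_M_add_one (a : ZMod 2) : (M + 1).eval a = 0 := by
  rw [M_add_one, eval_mul, eval_add, eval_X, eval_one]
  revert a
  decide

lemma natDegree_M_add_one : (M + 1).natDegree = 2 := by
  rw [natDegree_add_eq_left_of_natDegree_lt] <;> simp [natDegree_M]

lemma natDegree_one_add_M_pow_mul (i j : ℕ) (hij : i + j ≠ 0) :
    (1 + M ^ i * (M + 1) ^ j).natDegree = 2 * (i + j) := by
  have hprod : (M ^ i * (M + 1) ^ j).natDegree = 2 * (i + j) := by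
    rw [natDegree_mul (pow_ne_zero _ M_ne_zero) (pow_ne_zero _ M_add_one_ne_zero),
      natDegree_pow, natDegree_pow, natDegree_M, natDegree_M_add_one]
    ring
  rw [natDegree_add_eq_right_of_natDegree_lt] <;> simp only [hprod, natDegree_one]
  omega

lemma not_isRoot_one_add_M_pow_mul (i j : ℕ) (a : ZMod 2) :
    ¬ (1 + M ^ i * (M + 1) ^ (j + 1)).IsRoot a := by
  rw [IsRoot.def, eval_add, eval_mul, eval_pow, eval_pow, eval_M_add_one, zero_pow j.succ_ne_zero,
    mul_zero, add_zero, eval_one]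
  exact one_ne_zero

lemma one_add_M_pow_mul_ne_one (i j : ℕ) : 1 + M ^ i * (M + 1) ^ j ≠ 1 := by
  simpa using mul_ne_zero (pow_ne_zero i M_ne_zero) (pow_ne_zero j M_add_one_ne_zero)

lemma oddPart_X_pow_mul_X_add_one_pow_mul (a b : ℕ) {Q : (ZMod 2)[X]} (h0 : ¬ Q.IsRoot 0)
    (h1 : ¬ Q.IsRoot 1) : oddPart (X ^ a * (X + 1) ^ b * Q) = Q := by
  have hQ : Q ≠ 0 := fun h => h0 (by simp [h])
  have hmul : (X : (ZMod 2)[X]) ^ a * (X + 1) ^ b * Q = Q * (X - C 0) ^ a * (X - C 1) ^ b := by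
    rw [X_add_one_eq_X_sub_C, map_zero, sub_zero]
    ring
  have hQa : Q * (X - C 0) ^ a ≠ 0 := mul_ne_zero hQ (pow_ne_zero _ (X_sub_C_ne_zero 0))
  have hmult0 : (Q * (X - C 0) ^ a * (X - C 1) ^ b).rootMultiplicity 0 = a := by
    rw [rootMultiplicity_mul (mul_ne_zero hQa (pow_ne_zero _ (X_sub_C_ne_zero 1))),
      rootMultiplicity_mul_X_sub_C_pow hQ, rootMultiplicity_eq_zero h0,
      rootMultiplicity_eq_zero (by simp)]
    simp
  have hmult1 : (Q * (X - C 0) ^ a * (X - C 1) ^ b).rootMultiplicity 1 = b := by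
    rw [rootMultiplicity_mul_X_sub_C_pow hQa, rootMultiplicity_mul hQa,
      rootMultiplicity_eq_zero h1, rootMultiplicity_eq_zero (by simp)]
    simp
  have hX1 : (X : (ZMod 2)[X]) + 1 ≠ 0 := X_add_one_eq_X_sub_C (R := ZMod 2) ▸ X_sub_C_ne_zero 1
  rw [hmul, oddPart, hmult0, hmult1, ← X_add_one_eq_X_sub_C, map_zero, sub_zero, mul_assoc,
    mul_div_cancel_right₀ Q (mul_ne_zero (pow_ne_zero a X_ne_zero) (pow_ne_zero b hX1))]

lemma oddPart_M_add_one_pow_mul (e : ℕ) {Q : (ZMod 2)[X]} (h0 : ¬ Q.IsRoot 0)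
    (h1 : ¬ Q.IsRoot 1) : oddPart ((M + 1) ^ e * Q) = Q := by
  rw [M_add_one, mul_pow]
  exact oddPart_X_pow_mul_X_add_one_pow_mul e e h0 h1

lemma oddPart_eq_self {Q : (ZMod 2)[X]} (h0 : ¬ Q.IsRoot 0) (h1 : ¬ Q.IsRoot 1) :
    oddPart Q = Q := by
  simpa using oddPart_M_add_one_pow_mul 0 h0 h1

lemma collatz_one (A : (ZMod 2)[X]) : collatz A 1 = oddPart A := by
  simp [collatz]

lemma collatz_two_mul_add_three (A : (ZMod 2)[X]) (k : ℕ) :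
    collatz A (2 * k + 3) = oddPart (1 + M * collatz A (2 * k + 1)) := by
  simp [collatz, Nat.add_mod]

lemma collatzLength_eq {A : (ZMod 2)[X]} {n : ℕ} (hn : collatz A (2 * n + 1) = 1)
    (hlt : ∀ m < n, collatz A (2 * m + 1) ≠ 1) : collatzLength A = n + 1 := by
  have hleast : IsLeast {m : ℕ | collatz A (2 * m + 1) = 1} n :=
    ⟨hn, fun m hm => not_lt.mp fun h => hlt m h hm⟩
  rw [collatzLength, hleast.csInf_eq]

lemma collatz_two_mul_add_three_of_eq {A : (ZMod 2)[X]} {k i j : ℕ}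
    (h : collatz A (2 * k + 1) = 1 + M ^ i * (M + 1) ^ (j + 2)) :
    collatz A (2 * k + 3) = 1 + M ^ (i + 1) * (M + 1) ^ (j + 1) := by
  rw [collatz_two_mul_add_three, h, show 1 + M * (1 + M ^ i * (M + 1) ^ (j + 2))
    = (M + 1) ^ 1 * (1 + M ^ (i + 1) * (M + 1) ^ (j + 1)) by ring]
  exact oddPart_M_add_one_pow_mul 1 (not_isRoot_one_add_M_pow_mul _ _ _)
    (not_isRoot_one_add_M_pow_mul _ _ _)

lemma collatz_add_of_eq {A : (ZMod 2)[X]} {k i j : ℕ} (t : ℕ)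
    (h : collatz A (2 * k + 1) = 1 + M ^ i * (M + 1) ^ (j + t + 1)) :
    collatz A (2 * (k + t) + 1) = 1 + M ^ (i + t) * (M + 1) ^ (j + 1) := by
  induction t generalizing k i with
  | zero => simpa using h
  | succ t ih =>
    have hstep := collatz_two_mul_add_three_of_eq (j := j + t) h
    rw [show 2 * k + 3 = 2 * (k + 1) + 1 by ring] at hstep
    rw [show k + (t + 1) = k + 1 + t by ring, show i + (t + 1) = i + 1 + t by ring]
    exact ih hstep

lemma collatz_two_mul_add_one_of_eq {A : (ZMod 2)[X]} {n k : ℕ}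
    (hA : A = 1 + M * (M + 1) ^ (n + 1)) (hk : k ≤ n) :
    collatz A (2 * k + 1) = 1 + M ^ (k + 1) * (M + 1) ^ (n - k + 1) := by
  have hA' : A = 1 + M ^ 1 * (M + 1) ^ (n - k + k + 1) := by
    rw [hA, pow_one, Nat.sub_add_cancel hk]
  have hA_odd : collatz A (2 * 0 + 1) = 1 + M ^ 1 * (M + 1) ^ (n - k + k + 1) := by
    rw [collatz_one, hA']
    exact oddPart_eq_self (not_isRoot_one_add_M_pow_mul _ _ _) (not_isRoot_one_add_M_pow_mul _ _ _)
  simpa [add_comm 1 k] using collatz_add_of_eq k hA_odd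

lemma collatz_two_mul_add_three_eq_one {A : (ZMod 2)[X]} {k n r : ℕ} (hn : n + 1 = 2 ^ r)
    (h : collatz A (2 * k + 1) = 1 + M ^ n * (M + 1)) : collatz A (2 * k + 3) = 1 := by
  have hfactor : 1 + M * (1 + M ^ n * (M + 1)) = (M + 1) ^ (2 ^ r + 1) * 1 := by
    rw [pow_succ', add_pow_char_pow, one_pow, ← hn]
    ring
  rw [collatz_two_mul_add_three, h, hfactor]
  exact oddPart_M_add_one_pow_mul _ (by simp) (by simp)

theorem length_geom_sum_pow_two (r : ℕ) (hr : 1 ≤ r)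
    (A : Polynomial (ZMod 2)) (hA : A = ∑ i ∈ Finset.range (2 ^ r + 1), M ^ i) :
    (∀ k : ℕ, k ≤ 2 ^ r - 2 →
      collatz A (2 * k + 1) = 1 + M ^ (k + 1) * (M + 1) ^ (2 ^ r - k - 1) ∧
      (collatz A (2 * k + 1)).natDegree = A.natDegree) ∧
    collatz A (2 * (2 ^ r - 1) + 1) = 1 ∧
    collatzLength A = 2 ^ r := by
  obtain ⟨n, hn⟩ : ∃ n, 2 ^ r = n + 2 :=
    ⟨2 ^ r - 2, by have := Nat.pow_le_pow_right two_pos hr; omega⟩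
  have hA' : A = 1 + M * (M + 1) ^ (n + 1) := by
    rw [hA, geom_sum_succ, geom_sum_two_pow_eq_add_one_pow, hn, show n + 2 - 1 = n + 1 by omega]
    ring
  have horbit (k : ℕ) (hk : k ≤ 2 ^ r - 2) :
      collatz A (2 * k + 1) = 1 + M ^ (k + 1) * (M + 1) ^ (2 ^ r - k - 1) := by
    rw [show 2 ^ r - k - 1 = n - k + 1 by omega]
    exact collatz_two_mul_add_one_of_eq hA' (by omega)
  have hfinal : collatz A (2 * (2 ^ r - 1) + 1) = 1 := by
    rw [show 2 * (2 ^ r - 1) + 1 = 2 * n + 3 by omega]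
    refine collatz_two_mul_add_three_eq_one (n := n + 1) (r := r) (by omega) ?_
    rw [horbit n (by omega), show 2 ^ r - n - 1 = 1 by omega, pow_one]
  have hdegA : A.natDegree = 2 * (1 + (n + 1)) := by
    rw [hA', ← natDegree_one_add_M_pow_mul 1 (n + 1) (by omega), pow_one]
  refine ⟨fun k hk => ⟨horbit k hk, ?_⟩, hfinal, ?_⟩
  · rw [horbit k hk, hdegA, natDegree_one_add_M_pow_mul _ _ (by omega)]
    omega
  · rw [collatzLength_eq hfinal fun m hm => horbit m (by omega) ▸ one_add_M_pow_mul_ne_one _ _]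
    omega
end

section
/- Let r ≥ 2, 1 ≤ j ≤ 2^{r-1} - 1, and let A = (1 + M)^{2^r - j} + 1 in F_2[x]. Then the length ℓ_A equals 2^r + 1. -/
open Polynomial Finset

abbrev R2 := Polynomial (ZMod 2)
noncomputable def G2 (n : ℕ) : R2 := ∑ i ∈ range n, (X+1)^i

lemma htwo : (2 : R2) = 0 := by
  exact_mod_cast CharP.cast_eq_zero R2 2

lemma hX1 : (X + 1 : R2) = X - C 1 := by
  rw [map_one, sub_eq_add_neg]
  congr 1
  linear_combination htwo

lemma rm_zero_pow (v : ℕ) : (X ^ v : R2).rootMultiplicity 0 = v := by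
  simpa using rootMultiplicity_X_sub_C_pow (R := ZMod 2) 0 v

lemma rm_one_pow (v : ℕ) : ((X+1) ^ v : R2).rootMultiplicity 1 = v := by
  rw [hX1]
  exact rootMultiplicity_X_sub_C_pow (R := ZMod 2) 1 v

lemma rm_calc (v : ℕ) (Q : R2) (h0 : Q.eval 0 ≠ 0) (h1 : Q.eval 1 ≠ 0) :
    (X ^ v * (X+1) ^ v * Q).rootMultiplicity 0 = v ∧
    (X ^ v * (X+1) ^ v * Q).rootMultiplicity 1 = v := by
  have hQ0 : Q ≠ 0 := fun h => h0 (by simp [h])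
  have hx : (X:R2) ^ v ≠ 0 := pow_ne_zero _ X_ne_zero
  have hx1 : ((X:R2)+1) ^ v ≠ 0 := pow_ne_zero _ (by intro h; simpa using congrArg (eval 0) h)
  have hne : (X:R2) ^ v * (X+1) ^ v * Q ≠ 0 := mul_ne_zero (mul_ne_zero hx hx1) hQ0
  constructor
  · rw [rootMultiplicity_mul hne, rootMultiplicity_mul (mul_ne_zero hx hx1),
      rm_zero_pow, rootMultiplicity_eq_zero (by simp [IsRoot]),
      rootMultiplicity_eq_zero (by simpa [IsRoot] using h0)]
    omega
  · rw [rootMultiplicity_mul hne, rootMultiplicity_mul (mul_ne_zero hx hx1),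
      rm_one_pow, rootMultiplicity_eq_zero (by simp [IsRoot]),
      rootMultiplicity_eq_zero (by simpa [IsRoot] using h1)]
    omega

lemma oddPart_calc (v : ℕ) (Q : R2) (h0 : Q.eval 0 ≠ 0) (h1 : Q.eval 1 ≠ 0) :
    oddPart (X ^ v * (X+1) ^ v * Q) = Q := by
  obtain ⟨r0, r1⟩ := rm_calc v Q h0 h1
  rw [oddPart, r0, r1]
  have hx : (X:R2) ^ v * (X+1) ^ v ≠ 0 :=
    mul_ne_zero (pow_ne_zero _ X_ne_zero) (pow_ne_zero _ (by intro h; simpa using congrArg (eval 0) h))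
  exact (EuclideanDomain.eq_div_of_mul_eq_right hx rfl).symm

lemma oddPart_odd (P : R2) (h0 : P.eval 0 ≠ 0) (h1 : P.eval 1 ≠ 0) : oddPart P = P := by
  have := oddPart_calc 0 P h0 h1
  simpa using this

noncomputable def B2 : R2 := X^2 + X

lemma B2_eval0 : B2.eval 0 = 0 := by simp [B2]
lemma B2_eval1 : B2.eval 1 = 0 := by simp [B2]; decide

lemma compB_eval0 (Q : R2) : (Q.comp B2).eval 0 = Q.eval 0 := by
  rw [eval_comp, B2_eval0]
lemma compB_eval1 (Q : R2) : (Q.comp B2).eval 1 = Q.eval 0 := by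
  rw [eval_comp, B2_eval1]

lemma compB_ne_one (Q : R2) (hQ : Q ≠ 1) : Q.comp B2 ≠ 1 := by
  intro h
  have hd : (Q.comp B2).natDegree = Q.natDegree * 2 := by
    rw [natDegree_comp]; congr 1
    show (X^2+X : R2).natDegree = 2
    compute_degree!
  rw [h] at hd
  have hd0 : Q.natDegree = 0 := by simpa using hd.symm
  obtain ⟨c, hc⟩ := natDegree_eq_zero.mp hd0
  rw [← hc, C_comp] at h
  exact hQ (by rw [← hc, h])

lemma Xone_ne : (X + 1 : R2) ≠ 0 := fun h => by simpa using congrArg (eval 0) h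

/-- combined two-half-steps lemma -/
lemma step (A : R2) (k v : ℕ) (Q Q' : R2)
    (hk : collatz A (2*k+1) = Q.comp B2)
    (hid : 1 + (X+1) * Q = X ^ v * Q')
    (hQ'0 : Q'.eval 0 = 1) :
    collatz A (2*(k+1)+1) = Q'.comp B2 := by
  have heven : collatz A (2*k+2) = 1 + M * collatz A (2*k+1) := by
    show collatz A ((2*k+1)+1) = _
    rw [collatz]
    norm_num [Nat.add_mod, Nat.mul_mod]
  have hval : collatz A (2*k+2) = X ^ v * (X+1) ^ v * (Q'.comp B2) := by
    rw [heven, hk,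
      show (1:R2) + M * (Q.comp B2) = (1 + (X+1)*Q).comp B2 by
        simp only [add_comp, mul_comp, X_comp, one_comp, M, B2]; try ring,
      hid, mul_comp, pow_comp, X_comp,
      show (B2:R2) = X * (X+1) by rw [show (B2:R2) = X^2+X from rfl]; ring,
      mul_pow]
  have hodd : collatz A (2*(k+1)+1) = oddPart (collatz A (2*k+2)) := by
    rw [show 2*(k+1)+1 = (2*k+2)+1 by ring, collatz]
    norm_num [Nat.add_mod, Nat.mul_mod]
  rw [hodd, hval]
  exact oddPart_calc v _ (by rw [compB_eval0, hQ'0]; exact one_ne_zero)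
    (by rw [compB_eval1, hQ'0]; exact one_ne_zero)

lemma sq_eq_one_R2 {g : R2} (h : g^2 = 1) : g = 1 := by
  have h1 : (g + 1)^2 = 0 := by linear_combination h + (g+1)*htwo
  have h2 : g + 1 = 0 := pow_eq_zero_iff (n := 2) (by norm_num) |>.mp h1
  linear_combination h2 - htwo

/-- the squaring chain lemma -/
lemma chain (A : R2) : ∀ t : ℕ, ∀ g v g' k, 1 ≤ v → g.eval 0 = 1 → g'.eval 0 = 1 → g ≠ 1 →
    (1 + (X+1) * g = X ^ v * g') →
    collatz A (2*k+1) = (g^(2^t)).comp B2 →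
    collatz A (2*(k+2^t)+1) = (g'^(2^t)).comp B2 ∧
      ∀ i, k ≤ i → i < k + 2^t → collatz A (2*i+1) ≠ 1 := by
  intro t
  induction t with
  | zero =>
    intro g v g' k hv hg0 hg'0 hgne hid hk
    simp only [pow_zero, pow_one] at hk ⊢
    refine ⟨step A k v g g' hk hid hg'0, ?_⟩
    intro i hi1 hi2
    have : i = k := by omega
    subst this
    rw [hk]
    exact compB_ne_one g hgne
  | succ t ih =>
    intro g v g' k hv hg0 hg'0 hgne hid hk
    set h : R2 := X^(2*v-1) * g'^2 + (X+1) * g^2 with hh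
    have hv1 : 2*v-1 ≥ 1 := by omega
    have hxv : (X:R2) * X^(2*v-1) = X^(2*v) := by
      rw [← pow_succ']; congr 1; omega
    have hsq : 1 + (X+1)^2 * g^2 = X^(2*v) * g'^2 := by
      have hsq0 := congrArg (· ^ 2) hid
      linear_combination hsq0 - (X+1)*g*htwo
    have hidA : 1 + (X+1) * g^2 = X^1 * h := by
      rw [hh]
      linear_combination hsq - hxv*g'^2 - X*(X+1)*g^2*htwo
    have hidB : 1 + (X+1) * h = X^(2*v-1) * g'^2 := by
      rw [hh]
      linear_combination hsq + hxv*g'^2 + X^(2*v)*g'^2*htwo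
    have hg20 : (g^2).eval 0 = 1 := by simp [hg0]
    have hg'20 : (g'^2).eval 0 = 1 := by simp [hg'0]
    have hh0 : h.eval 0 = 1 := by
      rw [hh]
      simp [hg0, hg'0, zero_pow (by omega : 2*v-1 ≠ 0)]
    have hg2ne : g^2 ≠ 1 := fun e => hgne (sq_eq_one_R2 e)
    have hhne : h ≠ 1 := by
      intro e
      rw [e] at hidA
      have e2 : (X+1) * (g^2+1) = 0 := by linear_combination hidA + X*htwo
      rcases mul_eq_zero.mp e2 with e3 | e3
      · exact Xone_ne e3
      · have : g^2 = 1 := by linear_combination e3 - htwo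
        exact hg2ne this
    have hgg : ∀ q : R2, q^(2^(t+1)) = (q^2)^(2^t) := by
      intro q
      rw [← pow_mul, pow_succ']
    have hk2 : collatz A (2*k+1) = ((g^2)^(2^t)).comp B2 := by
      rw [hk, hgg]
    obtain ⟨r1, n1⟩ := ih (g^2) 1 h k le_rfl hg20 hh0 hg2ne hidA hk2
    obtain ⟨r2, n2⟩ := ih h (2*v-1) (g'^2) (k+2^t) hv1 hh0 hg'20 hhne hidB r1
    have hpow : (2:ℕ)^(t+1) = 2^t + 2^t := by rw [pow_succ]; omega
    constructor
    · rw [show k + 2^(t+1) = (k + 2^t) + 2^t by omega]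
      rw [r2, hgg]
    · intro i hi1 hi2
      by_cases hc : i < k + 2^t
      · exact n1 i hi1 hc
      · exact n2 i (by omega) (by omega)

lemma gsum (n : ℕ) : (X:R2) * G2 n = (X+1)^n + 1 := by
  have h := geom_sum_mul ((X:R2)+1) n
  rw [G2]
  linear_combination h - htwo

lemma G2_eval0 {n : ℕ} (hn : Odd n) : (G2 n).eval 0 = 1 := by
  rw [G2, eval_finset_sum]
  simp only [eval_pow, eval_add, eval_X, eval_one, zero_add, one_pow, sum_const, card_range,
    nsmul_eq_mul, mul_one]
  have : (n : ZMod 2) = ((n % 2 : ℕ) : ZMod 2) := (ZMod.natCast_mod n 2).symm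
  rw [this, Nat.odd_iff.mp hn]
  rfl

lemma G2_ne_one {n : ℕ} (hn : 3 ≤ n) : G2 n ≠ 1 := by
  intro h
  have h1 := gsum n
  rw [h, mul_one] at h1
  have h2 : ((X:R2)+1)^n = X + 1 := by linear_combination -h1 - htwo
  have h3 : (((X:R2)+1)^n).natDegree = ((X:R2)+1).natDegree := by rw [h2]
  have hd1 : ((X:R2)+1).natDegree = 1 := by compute_degree!
  have hdn : (((X:R2)+1)^n).natDegree = n := by
    have : ((X:R2)+1).Monic := by
      have : ((X:R2)+1) = X + C 1 := by rw [map_one]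
      rw [this]; exact monic_X_add_C 1
    rw [this.natDegree_pow, hd1, mul_one]
  omega

lemma phase1 (A : R2) (N : ℕ) (hN : 3 ≤ N) (hA : A = (X^2+X)^N + 1) :
    ∀ k, k < N → collatz A (2*k+1) = ((1 + X^(N-k)*(X+1)^k : R2)).comp B2 := by
  intro k
  induction k with
  | zero =>
    intro _
    have hodd : collatz A 1 = oddPart A := by
      rw [show (1:ℕ) = 0+1 from rfl, collatz]
      simp only [Nat.zero_mod, if_pos rfl]
      rfl
    have hA0 : A.eval 0 ≠ 0 := by
      rw [hA]; simp [zero_pow (by omega : N ≠ 0)]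
    have hA1 : A.eval 1 ≠ 0 := by
      rw [hA]
      simp only [eval_add, eval_pow, eval_X, eval_one]
      rw [show ((1:ZMod 2)^2 + 1 : ZMod 2) = 0 by decide]
      rw [zero_pow (by omega : N ≠ 0)]
      simp
    rw [hodd, oddPart_odd A hA0 hA1, hA]
    simp only [Nat.sub_zero, pow_zero, mul_one, add_comp, one_comp, pow_comp, X_comp]
    rw [show (B2:R2) = X^2+X from rfl]
    ring
  | succ k ih =>
    intro hk1
    have hk : k < N := by omega
    have hprev := ih hk
    set e : ℕ := N - (k+1) with he
    have he1 : 1 ≤ e := by omega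
    have heN : N - k = e + 1 := by omega
    rw [heN] at hprev
    apply step A k 1 _ _ hprev
    · linear_combination htwo
    · simp [zero_pow (by omega : e ≠ 0), zero_pow (by omega : e + 1 ≠ 0)]

/-- key power identity: 1 + (X+1)^(2^s * m) = (X^(2^s)) * (G2 m)^(2^s) -/
lemma pow_gsum (s m : ℕ) : (1:R2) + (X+1)^(2^s * m) = X^(2^s) * (G2 m)^(2^s) := by
  have e1 : ((X:R2) * G2 m)^(2^s) = ((X+1)^m + 1)^(2^s) := by rw [gsum]
  rw [mul_pow] at e1
  have e2 : (((X:R2)+1)^m + 1)^(2^s) = ((X+1)^m)^(2^s) + 1^(2^s) :=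
    add_pow_char_pow (((X:R2)+1)^m) 1 2 s
  rw [e2] at e1
  rw [e1, one_pow, ← pow_mul, mul_comm m (2^s)]
  ring

/-- the phase-2 transition identity -/
lemma hidT {N' τ K : ℕ} (hτ : 1 ≤ τ) (hNK : 2^τ * K = N' + 1) :
    (1:R2) + (X+1) * (G2 N') = X^(2^τ - 1) * ((G2 K)^(2^τ)) := by
  apply mul_left_cancel₀ (X_ne_zero (R := ZMod 2))
  have hxv : (X:R2) * X^(2^τ-1) = X^(2^τ) := by
    rw [← pow_succ']
    congr 1
    have := Nat.one_le_two_pow (n := τ)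
    omega
  have e1 := gsum N'
  have e2 : (1:R2) + (X+1)^(N'+1) = X^(2^τ) * (G2 K)^(2^τ) := by
    rw [← hNK]; exact pow_gsum τ K
  linear_combination (X+1)*e1 + e2 - hxv*(G2 K)^(2^τ) + X*htwo

lemma phase2 (A : R2) (r : ℕ) :
    ∀ c t N' k, Odd N' → 3 ≤ N' → k = 2^t * N' → 2^(r-1) < k → k < 2^r → c = 2^r - k →
    collatz A (2*k+1) = ((G2 N')^(2^t)).comp B2 →
    collatz A (2*2^r+1) = 1 ∧ ∀ i, k ≤ i → i < 2^r → collatz A (2*i+1) ≠ 1 := by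
  intro c
  induction c using Nat.strong_induction_on with
  | _ c ih =>
    intro t N' k hodd h3 hk hklo hkhi hc hreach
    -- factor N'+1 = 2^τ * K
    set τ := (N'+1).factorization 2 with hτdef
    set K := (N'+1) / 2^τ with hKdef
    have hN0 : N' + 1 ≠ 0 := by omega
    have hfact : 2^τ * K = N' + 1 := Nat.ordProj_mul_ordCompl_eq_self (N'+1) 2
    have hKodd : Odd K :=
      Nat.odd_iff.mpr (Nat.two_dvd_ne_zero.mp (Nat.not_dvd_ordCompl Nat.prime_two hN0))
    have hτ1 : 1 ≤ τ := by
      have hdvd : 2 ∣ N' + 1 := by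
        rcases hodd with ⟨m, hm⟩; omega
      exact (Nat.Prime.factorization_pos_of_dvd Nat.prime_two hN0 hdvd)
    -- bounds
    have h2t1 : 1 ≤ 2^t := Nat.one_le_two_pow
    have h2τ1 : 1 ≤ 2^τ := Nat.one_le_two_pow
    have htr : t < r := by
      have h1 : 2^t ≤ 2^t * N' := Nat.le_mul_of_pos_right _ (by omega)
      have h2 : (2:ℕ)^t < 2^r := lt_of_le_of_lt (hk ▸ h1) hkhi
      exact (Nat.pow_lt_pow_iff_right (by norm_num)).mp h2
    have hk2le : k + 2^t ≤ 2^r := by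
      have hsplit : (2:ℕ)^r = 2^t * 2^(r-t) := by
        rw [← pow_add]; congr 1; omega
      have hlt : N' < 2^(r-t) := by
        have : 2^t * N' < 2^t * 2^(r-t) := by rw [← hsplit]; omega
        exact Nat.lt_of_mul_lt_mul_left this
      have hb : 2^t * (N'+1) ≤ 2^t * 2^(r-t) := Nat.mul_le_mul_left _ (by omega)
      rw [← hsplit] at hb
      have hbb : 2^t * (N'+1) = k + 2^t := by rw [hk]; ring
      omega
    -- apply the chain
    have hGK0 : ((G2 K)^(2^τ)).eval 0 = 1 := by
      rw [eval_pow, G2_eval0 hKodd, one_pow]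
    obtain ⟨r1, n1⟩ := chain A t (G2 N') (2^τ - 1) ((G2 K)^(2^τ)) k
      (by
        have h : (2:ℕ) ≤ 2^τ := by
          calc (2:ℕ) = 2^1 := (pow_one 2).symm
          _ ≤ 2^τ := Nat.pow_le_pow_right (by norm_num) hτ1
        omega)
      (G2_eval0 hodd) hGK0 (G2_ne_one h3) (hidT hτ1 hfact) hreach
    have hk2 : k + 2^t = 2^(t+τ) * K := by
      rw [pow_add, mul_assoc, hfact, hk]; ring
    have hexp : (2:ℕ)^τ * 2^t = 2^(t+τ) := by rw [pow_add]; ring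
    have hr1' : collatz A (2*(k+2^t)+1) = ((G2 K)^(2^(t+τ))).comp B2 := by
      rw [r1, show ((G2 K)^(2^τ))^(2^t) = (G2 K)^(2^(t+τ)) from by rw [← pow_mul, hexp]]
    by_cases hK1 : K = 1
    · -- reached 1
      have hpow2 : k + 2^t = 2^(t+τ) := by rw [hk2, hK1, mul_one]
      have heq : t + τ = r := by
        have h1 : 2^(r-1) < 2^(t+τ) := by omega
        have h2 : (2:ℕ)^(t+τ) ≤ 2^r := by omega
        have e1 : r - 1 < t + τ := (Nat.pow_lt_pow_iff_right (a := 2) (by norm_num)).mp h1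
        have e2 : t + τ ≤ r := (Nat.pow_le_pow_iff_right (by norm_num)).mp h2
        omega
      have hG1 : G2 1 = 1 := by simp [G2]
      rw [hK1, hG1, one_pow, one_comp] at hr1'
      constructor
      · rw [← heq, ← hpow2]; exact hr1'
      · intro i h1 h2
        apply n1 i h1
        have hkr : k + 2^t = 2^r := by rw [hpow2, heq]
        omega
    · -- recurse
      have hK3 : 3 ≤ K := by
        rcases hKodd with ⟨m, hm⟩
        omega
      have hk2hi : k + 2^t < 2^r := by
        rcases Nat.lt_or_ge (k + 2^t) (2^r) with h | h
        · exact h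
        · exfalso
          have he : 2^(t+τ) * K = 2^r := by omega
          have hdvd : K ∣ 2^r := Dvd.intro_left _ he
          exact hK1 (((Nat.coprime_two_right.mpr hKodd).pow_right r).eq_one_of_dvd hdvd)
      obtain ⟨rec1, rec2⟩ := ih (2^r - (k + 2^t)) (by omega) (t+τ) K (k+2^t) hKodd hK3
        hk2 (by omega) hk2hi rfl hr1'
      refine ⟨rec1, ?_⟩
      intro i h1 h2
      by_cases hcase : i < k + 2^t
      · exact n1 i h1 hcase
      · exact rec2 i (by omega) h2

theorem length_one_add_M_pow_add_one (r j : ℕ) (hr : 2 ≤ r) (hj1 : 1 ≤ j)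
    (hj2 : j ≤ 2 ^ (r - 1) - 1)
    (A : Polynomial (ZMod 2)) (hA : A = (1 + M) ^ (2 ^ r - j) + 1) :
    collatzLength A = 2 ^ r + 1 := by
  set N : ℕ := 2 ^ r - j with hNdef
  -- numeric facts
  have h2r : (2:ℕ)^r = 2^(r-1) + 2^(r-1) := by
    rw [← two_mul, ← pow_succ']
    congr 1
    omega
  have h2r1 : (2:ℕ) ≤ 2^(r-1) := by
    calc (2:ℕ) = 2^1 := (pow_one 2).symm
    _ ≤ 2^(r-1) := Nat.pow_le_pow_right (by norm_num) (by omega)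
  have hNlo : 2^(r-1) < N := by omega
  have hNhi : N < 2^r := by omega
  have hN3 : 3 ≤ N := by omega
  -- A in B2-composed form
  have hM : (1:R2) + M = X^2+X := by
    simp only [M]
    linear_combination htwo
  have hA' : A = (X^2+X)^N + 1 := by rw [hA, hM]
  -- factorization of N
  set s : ℕ := N.factorization 2 with hsdef
  set N' : ℕ := N / 2^s with hN'def
  have hN0 : N ≠ 0 := by omega
  have hfact : 2^s * N' = N := Nat.ordProj_mul_ordCompl_eq_self N 2
  have hN'odd : Odd N' :=
    Nat.odd_iff.mpr (Nat.two_dvd_ne_zero.mp (Nat.not_dvd_ordCompl Nat.prime_two hN0))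
  have hN'3 : 3 ≤ N' := by
    rcases hN'odd with ⟨m, hm⟩
    rcases Nat.lt_or_ge N' 3 with hlt | hge
    · exfalso
      have hN'1 : N' = 1 := by omega
      rw [hN'1, mul_one] at hfact
      have e1 : r - 1 < s := (Nat.pow_lt_pow_iff_right (a := 2) (by norm_num)).mp (by omega)
      have e2 : s < r := (Nat.pow_lt_pow_iff_right (a := 2) (by norm_num)).mp (by omega)
      omega
    · exact hge
  -- phase 1 up to N-1
  have hp1 := phase1 A N hN3 hA'
  have hbound := hp1 (N-1) (by omega)
  have hNsub : N - (N-1) = 1 := by omega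
  rw [hNsub] at hbound
  -- boundary step
  have hpg : (1:R2) + (X+1)^((N-1)+1) = X^(2^s) * (G2 N')^(2^s) := by
    rw [show N-1+1 = N by omega, ← hfact]
    exact pow_gsum s N'
  have hstepb := step A (N-1) (2^s+1) _ ((G2 N')^(2^s)) hbound
    (by
      set m : ℕ := N - 1 with hmdef
      linear_combination X*hpg + htwo)
    (by rw [eval_pow, G2_eval0 hN'odd, one_pow])
  rw [show N-1+1 = N by omega] at hstepb
  -- phase 2
  obtain ⟨hfinal, hnotone2⟩ := phase2 A r (2^r - N) s N' N hN'odd hN'3 hfact.symm hNlo hNhi rfl hstepb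
  -- non-one in phase 1 region
  have hnotone1 : ∀ i, i < N → collatz A (2*i+1) ≠ 1 := by
    intro i hi
    rw [hp1 i hi]
    apply compB_ne_one
    intro h
    have h0 : (X:R2)^(N-i)*(X+1)^i = 0 := by
      have := (left_eq_add (a := (1:R2))).mp h.symm
      exact this
    exact (mul_ne_zero (pow_ne_zero _ X_ne_zero) (pow_ne_zero _ Xone_ne)) h0
  -- compute sInf
  have hSinf : sInf {m : ℕ | collatz A (2 * m + 1) = 1} = 2^r := by
    apply le_antisymm
    · exact Nat.sInf_le hfinal
    · by_contra hlt
      push_neg at hlt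
      have hmem : sInf {m : ℕ | collatz A (2 * m + 1) = 1} ∈ {m : ℕ | collatz A (2 * m + 1) = 1} :=
        Nat.sInf_mem ⟨2^r, hfinal⟩
      set m₀ := sInf {m : ℕ | collatz A (2 * m + 1) = 1}
      rcases Nat.lt_or_ge m₀ N with hc | hc
      · exact hnotone1 m₀ hc hmem
      · exact hnotone2 m₀ hc hlt hmem
  rw [collatzLength, hSinf]
end
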